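/- arXiv:2204.04568 — 9 statements merged into one kernel-verified Lean document; each statement's English description precedes it below -/
import Mathlib

section
/- If T is a finite r-uniform hypergraph tree (built iteratively from a root (r-1)-set by at each step adding a new vertex v together with one edge σ ∪ {v}, where σ is an (r-1)-subset of a previously added edge or the root), then the (r-1)-covering number of T equals its (r-1)-matching number: τ^{(r-1)}(T) = ν^{(r-1)}(T). -/
variable {V : Type*} [DecidableEq V]

/-- `M` is an `m`-matching of `G`: a set of edges pairwise intersecting in fewer
than `m` vertices. -/
def IsMMatching (G : Finset (Finset V)) (m : ℕ) (M : Finset (Finset V)) : Prop :=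
  M ⊆ G ∧ ∀ e ∈ M, ∀ f ∈ M, e ≠ f → (e ∩ f).card < m

/-- `C` is an `m`-cover of `G`: a family of `m`-element vertex sets such that every
edge of `G` contains a member of `C`. -/
def IsMCover (G : Finset (Finset V)) (m : ℕ) (C : Finset (Finset V)) : Prop :=
  (∀ s ∈ C, s.card = m) ∧ ∀ e ∈ G, ∃ s ∈ C, s ⊆ e

/-- The `m`-matching number `ν^{(m)}(G)`. -/
noncomputable def nuM (G : Finset (Finset V)) (m : ℕ) : ℕ :=
  sSup {k | ∃ M, IsMMatching G m M ∧ M.card = k}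

/-- The `m`-covering number `τ^{(m)}(G)`. -/
noncomputable def tauM (G : Finset (Finset V)) (m : ℕ) : ℕ :=
  sInf {k | ∃ C, IsMCover G m C ∧ C.card = k}

/-- `D(G)` (with parameter `m`): the `m`-element vertex subsets contained in at
least one edge of `G`. -/
def Dset (G : Finset (Finset V)) (m : ℕ) : Finset (Finset V) :=
  G.biUnion fun e => e.powersetCard m

/-- An `r`-uniform tree rooted at an `(r-1)`-set, built iteratively; the first
component is the vertex set built so far, the second the edge set. -/
inductive IsRTree (r : ℕ) : Finset V → Finset (Finset V) → Prop
  | base (ρ : Finset V) (v : V) (hρ : ρ.card = r - 1) (hv : v ∉ ρ) :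
      IsRTree r (insert v ρ) {insert v ρ}
  | step (S : Finset V) (T : Finset (Finset V)) (e σ : Finset V) (v : V)
      (hT : IsRTree r S T) (he : e ∈ T) (hσe : σ ⊆ e) (hσ : σ.card = r - 1)
      (hv : v ∉ S) : IsRTree r (insert v S) (insert (insert v σ) T)

lemma edges_subset {r : ℕ} {S : Finset V} {T : Finset (Finset V)}
    (hT : IsRTree r S T) : ∀ f ∈ T, f ⊆ S := by
  induction hT with
  | base ρ v hρ hv => intro f hf; simp at hf; subst hf; exact subset_rfl
  | step S T e σ v hT he hσe hσ hv ih =>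
    intro f hf
    rcases Finset.mem_insert.1 hf with hf | hf
    · subst hf
      exact Finset.insert_subset_insert v ((hσe.trans (ih e he)))
    · exact (ih f hf).trans (Finset.subset_insert v S)

lemma key {r : ℕ} {S : Finset V} {T : Finset (Finset V)}
    (hT : IsRTree r S T) :
    ∀ C₀ : Finset (Finset V), ∃ M C : Finset (Finset V),
      IsMMatching T (r - 1) M ∧ (∀ s ∈ C, s.card = r - 1) ∧
      (∀ f ∈ T, (∃ c ∈ C, c ⊆ f) ∨ (∃ c ∈ C₀, c ⊆ f)) ∧
      M.card = C.card ∧ (∀ f ∈ M, ∀ c ∈ C₀, ¬ c ⊆ f) ∧ (∀ c ∈ C, c ∉ C₀) := by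
  induction hT with
  | base ρ v hρ hv =>
    intro C₀
    by_cases h : ∃ c ∈ C₀, c ⊆ insert v ρ
    · exact ⟨∅, ∅, ⟨Finset.empty_subset _, by simp⟩, by simp, by
        intro f hf; simp at hf; subst hf; exact Or.inr h, by simp, by simp, by simp⟩
    · refine ⟨{insert v ρ}, {ρ}, ⟨by simp, ?_⟩, by simpa using hρ, ?_, by simp, ?_, ?_⟩
      · intro e he f hf hne; simp at he hf; subst he; subst hf; exact absurd rfl hne
      · intro f hf; simp at hf; subst hf
        exact Or.inl ⟨ρ, by simp, Finset.subset_insert v ρ⟩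
      · intro f hf c hc hcf
        simp at hf; subst hf; exact h ⟨c, hc, hcf⟩
      · intro c hc; simp at hc; subst hc
        intro hmem; exact h ⟨_, hmem, Finset.subset_insert v _⟩
  | step S T e σ v hT he hσe hσ hv ih =>
    intro C₀
    have hTS : ∀ f ∈ T, f ⊆ S := edges_subset hT
    have hvσ : v ∉ σ := fun hvσ => hv (hTS e he (hσe hvσ))
    have he'T : insert v σ ∉ T := fun h' => hv (hTS _ h' (Finset.mem_insert_self v σ))
    by_cases h : ∃ c ∈ C₀, c ⊆ insert v σ
    · obtain ⟨M, C, hM, hCc, hcov, hcard, hcompat, hdisj⟩ := ih C₀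
      refine ⟨M, C, ⟨hM.1.trans (Finset.subset_insert _ _), hM.2⟩, hCc, ?_, hcard,
        hcompat, hdisj⟩
      intro f hf
      rcases Finset.mem_insert.1 hf with hf | hf
      · subst hf; exact Or.inr h
      · exact hcov f hf
    · obtain ⟨M, C, hM, hCc, hcov, hcard, hcompat, hdisj⟩ := ih (insert σ C₀)
      have hσC : σ ∉ C := fun hσC => hdisj σ hσC (Finset.mem_insert_self σ C₀)
      have he'M : insert v σ ∉ M := fun h' => he'T (hM.1 h')
      have hinter : ∀ f ∈ M, ((insert v σ) ∩ f).card < r - 1 := by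
        intro f hf
        have hsub : (insert v σ) ∩ f ⊆ σ := by
          intro x hx
          rcases Finset.mem_inter.1 hx with ⟨hx1, hx2⟩
          rcases Finset.mem_insert.1 hx1 with rfl | hx1
          · exact absurd (hTS f (hM.1 hf) hx2) hv
          · exact hx1
        rcases lt_or_eq_of_le (Finset.card_le_card hsub) with hlt | heq
        · omega
        · exfalso
          have : (insert v σ) ∩ f = σ := Finset.eq_of_subset_of_card_le hsub (by omega)
          exact hcompat f hf σ (Finset.mem_insert_self σ C₀)
            (this ▸ Finset.inter_subset_right)
      refine ⟨insert (insert v σ) M, insert σ C, ⟨?_, ?_⟩, ?_, ?_, ?_, ?_, ?_⟩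
      · exact Finset.insert_subset_insert _ hM.1
      · intro a ha b hb hne
        rcases Finset.mem_insert.1 ha with rfl | ha <;>
          rcases Finset.mem_insert.1 hb with rfl | hb
        · exact absurd rfl hne
        · exact hinter b hb
        · rw [Finset.inter_comm]; exact hinter a ha
        · exact hM.2 a ha b hb hne
      · intro s hs
        rcases Finset.mem_insert.1 hs with rfl | hs
        · exact hσ
        · exact hCc s hs
      · intro f hf
        rcases Finset.mem_insert.1 hf with rfl | hf
        · exact Or.inl ⟨σ, Finset.mem_insert_self σ C, Finset.subset_insert v σ⟩
        · rcases hcov f hf with ⟨c, hc, hcf⟩ | ⟨c, hc, hcf⟩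
          · exact Or.inl ⟨c, Finset.mem_insert_of_mem hc, hcf⟩
          · rcases Finset.mem_insert.1 hc with rfl | hc
            · exact Or.inl ⟨c, Finset.mem_insert_self c C, hcf⟩
            · exact Or.inr ⟨c, hc, hcf⟩
      · rw [Finset.card_insert_of_notMem he'M, Finset.card_insert_of_notMem hσC, hcard]
      · intro f hf c hc hcf
        rcases Finset.mem_insert.1 hf with rfl | hf
        · exact h ⟨c, hc, hcf⟩
        · exact hcompat f hf c (Finset.mem_insert_of_mem hc) hcf
      · intro c hc
        rcases Finset.mem_insert.1 hc with rfl | hc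
        · exact fun hcC₀ => h ⟨c, hcC₀, Finset.subset_insert v c⟩
        · exact fun hcC₀ => hdisj c hc (Finset.mem_insert_of_mem hcC₀)

lemma matching_le_cover {T : Finset (Finset V)} {m : ℕ} {M C : Finset (Finset V)}
    (hM : IsMMatching T m M) (hC : IsMCover T m C) : M.card ≤ C.card := by
  have hpick : ∀ f ∈ M, ∃ s ∈ C, s ⊆ f := fun f hf => hC.2 f (hM.1 hf)
  classical
  set g : Finset V → Finset V := fun f =>
    if h : ∃ s ∈ C, s ⊆ f then h.choose else ∅ with hg
  have hgC : ∀ f ∈ M, g f ∈ C ∧ g f ⊆ f := by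
    intro f hf
    have h := hpick f hf
    simp only [hg, dif_pos h]
    exact ⟨h.choose_spec.1, h.choose_spec.2⟩
  apply Finset.card_le_card_of_injOn g (fun f hf => (hgC f hf).1)
  intro a ha b hb hab
  by_contra hne
  have h1 : g a ⊆ a ∩ b := Finset.subset_inter (hgC a ha).2 (hab ▸ (hgC b hb).2)
  have h2 : (g a).card = m := hC.1 _ (hgC a ha).1
  have := hM.2 a ha b hb hne
  have := Finset.card_le_card h1
  omega

theorem stmt3 (r : ℕ) (hr : 2 ≤ r) (S : Finset V) (T : Finset (Finset V))
    (hT : IsRTree r S T) : tauM T (r - 1) = nuM T (r - 1) := by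
  obtain ⟨M, C, hM, hCc, hcov, hcard, -, -⟩ := key hT ∅
  have hCcover : IsMCover T (r - 1) C :=
    ⟨hCc, fun e he => (hcov e he).resolve_right (by simp)⟩
  have hne : {k | ∃ C', IsMCover T (r - 1) C' ∧ C'.card = k}.Nonempty :=
    ⟨C.card, C, hCcover, rfl⟩
  have hbdd : BddAbove {k | ∃ M', IsMMatching T (r - 1) M' ∧ M'.card = k} := by
    refine ⟨T.card, ?_⟩
    rintro k ⟨M', hM', rfl⟩
    exact Finset.card_le_card hM'.1
  rw [tauM, nuM]
  apply le_antisymm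
  · calc sInf {k | ∃ C', IsMCover T (r - 1) C' ∧ C'.card = k} ≤ C.card :=
          Nat.sInf_le ⟨C, hCcover, rfl⟩
      _ = M.card := hcard.symm
      _ ≤ _ := le_csSup hbdd ⟨M, hM, rfl⟩
  · obtain ⟨C', hC', hC'card⟩ := Nat.sInf_mem hne
    refine csSup_le ⟨0, ⟨∅, ⟨Finset.empty_subset _, by simp⟩, rfl⟩⟩ ?_
    rintro k ⟨M', hM', rfl⟩
    calc M'.card ≤ C'.card := matching_le_cover hM' hC'
      _ = _ := hC'card
end

section
/- For any finite 3-uniform hypergraph G, the 2-covering number satisfies τ^{(2)}(G) ≤ |D(G)|/2, where D(G) is the set of pairs of vertices contained in at least one edge of G. -/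
/-!
Split the vertices at random into a set `S` and its complement. Every triple has two vertices
in the same block, so the pairs of `D(G)` lying inside a block form a 2-cover; each pair lies
inside a block for exactly half of all choices of `S`, so some `S` keeps at most `|D(G)|/2` pairs.
-/

variable {V : Type*} [DecidableEq V]

namespace Finset

open scoped Finset symmDiff

lemma two_mul_card_powerset_filter_mem_iff_mem {W : Finset V} {a b : V} (ha : a ∈ W)
    (hab : a ≠ b) : 2 * #{S ∈ W.powerset | a ∈ S ↔ b ∈ S} = 2 ^ #W := by
  -- toggling `a` swaps the subsets where `a`, `b` agree with those where they differ
  have toggle_mem_a (S : Finset V) : a ∈ S ∆ {a} ↔ a ∉ S := by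
    simp [mem_symmDiff]
  have toggle_mem_b (S : Finset V) : b ∈ S ∆ {a} ↔ b ∈ S := by
    simp [mem_symmDiff, hab.symm]
  have toggle_subset {S : Finset V} (hS : S ⊆ W) : S ∆ {a} ⊆ W :=
    symmDiff_subset_union.trans (union_subset hS (singleton_subset_iff.2 ha))
  have toggle_toggle (S : Finset V) : S ∆ {a} ∆ {a} = S :=
    symmDiff_symmDiff_cancel_right {a} S
  have halves : #{S ∈ W.powerset | a ∈ S ↔ b ∈ S} = #{S ∈ W.powerset | ¬(a ∈ S ↔ b ∈ S)} := by
    refine card_nbij' (symmDiff · {a}) (symmDiff · {a}) ?_ ?_ (fun S _ ↦ toggle_toggle S)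
      (fun S _ ↦ toggle_toggle S) <;>
    · intro S hS
      simp only [coe_filter, mem_powerset, Set.mem_ofPred_eq, toggle_mem_a, toggle_mem_b] at hS ⊢
      exact ⟨toggle_subset hS.1, by tauto⟩
  have := card_filter_add_card_filter_not (s := W.powerset) (fun S ↦ a ∈ S ↔ b ∈ S)
  rw [card_powerset] at this
  omega

lemma subset_or_disjoint_iff_mem_iff_mem (S : Finset V) (a b : V) :
    ({a, b} ⊆ S ∨ Disjoint {a, b} S) ↔ (a ∈ S ↔ b ∈ S) := by
  simp only [insert_subset_iff, singleton_subset_iff, disjoint_insert_left,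
    disjoint_singleton_left]
  tauto

lemma exists_two_mul_card_filter_subset_or_disjoint_le (D : Finset (Finset V))
    (hD : ∀ p ∈ D, #p = 2) : ∃ S : Finset V, 2 * #{p ∈ D | p ⊆ S ∨ Disjoint p S} ≤ #D := by
  set W := D.biUnion id
  have double_count :
      ∑ S ∈ W.powerset, 2 * #{p ∈ D | p ⊆ S ∨ Disjoint p S} = ∑ _S ∈ W.powerset, #D :=
    calc ∑ S ∈ W.powerset, 2 * #{p ∈ D | p ⊆ S ∨ Disjoint p S}
        = ∑ p ∈ D, 2 * #{S ∈ W.powerset | p ⊆ S ∨ Disjoint p S} := by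
          simp only [card_filter, ← mul_sum]
          rw [sum_comm]
      _ = ∑ _p ∈ D, 2 ^ #W := sum_congr rfl fun p hp ↦ by
          obtain ⟨a, b, hab, rfl⟩ := card_eq_two.1 (hD p hp)
          simp only [subset_or_disjoint_iff_mem_iff_mem]
          exact two_mul_card_powerset_filter_mem_iff_mem (mem_biUnion.2 ⟨_, hp, by simp⟩) hab
      _ = ∑ _S ∈ W.powerset, #D := by simp [mul_comm]
  obtain ⟨S, -, hS⟩ := exists_le_of_sum_le (powerset_nonempty W) double_count.le
  exact ⟨S, hS⟩

lemma exists_card_eq_two_subset_and_subset_or_disjoint {e : Finset V} (he : 3 ≤ #e)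
    (S : Finset V) : ∃ p ⊆ e, #p = 2 ∧ (p ⊆ S ∨ Disjoint p S) := by
  have : 2 ≤ #(e ∩ S) ∨ 2 ≤ #(e \ S) := by
    have := card_inter_add_card_sdiff e S
    omega
  rcases this with hin | hout
  · obtain ⟨p, hp, hp2⟩ := exists_subset_card_eq hin
    exact ⟨p, hp.trans inter_subset_left, hp2, .inl (hp.trans inter_subset_right)⟩
  · obtain ⟨p, hp, hp2⟩ := exists_subset_card_eq hout
    exact ⟨p, hp.trans sdiff_subset, hp2, .inr (disjoint_of_subset_left hp sdiff_disjoint)⟩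

end Finset

open Finset

lemma card_of_mem_Dset {G : Finset (Finset V)} {m : ℕ} {p : Finset V} (hp : p ∈ Dset G m) :
    p.card = m := by
  obtain ⟨e, -, hpe⟩ := mem_biUnion.1 hp
  exact (mem_powersetCard.1 hpe).2

lemma isMCover_filter_subset_or_disjoint {G : Finset (Finset V)} (hG : ∀ e ∈ G, 3 ≤ e.card)
    (S : Finset V) : IsMCover G 2 ((Dset G 2).filter fun p ↦ p ⊆ S ∨ Disjoint p S) := by
  refine ⟨fun p hp ↦ card_of_mem_Dset (mem_filter.1 hp).1, fun e he ↦ ?_⟩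
  obtain ⟨p, hpe, hp2, hpS⟩ := exists_card_eq_two_subset_and_subset_or_disjoint (hG e he) S
  exact ⟨p, mem_filter.2 ⟨mem_biUnion.2 ⟨e, he, mem_powersetCard.2 ⟨hpe, hp2⟩⟩, hpS⟩, hpe⟩

theorem stmt4 (G : Finset (Finset V)) (hG : ∀ e ∈ G, e.card = 3) :
    (tauM G 2 : ℝ) ≤ ((Dset G 2).card : ℝ) / 2 := by
  obtain ⟨S, hS⟩ :=
    exists_two_mul_card_filter_subset_or_disjoint_le (Dset G 2) fun _ ↦ card_of_mem_Dset
  have hτ : tauM G 2 ≤ _ :=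
    Nat.sInf_le ⟨_, isMCover_filter_subset_or_disjoint (fun e he ↦ (hG e he).ge) S, rfl⟩
  rw [le_div_iff₀ two_pos]
  exact_mod_cast (by omega : tauM G 2 * 2 ≤ (Dset G 2).card)
end

section
/- For any finite 4-uniform hypergraph G, τ^{(3)}(G) ≤ (4/9)|D(G)|, where D(G) is the set of 3-element vertex subsets contained in at least one edge. -/
variable {V : Type*} [DecidableEq V]

/-
Colour the vertices uniformly at random with `ZMod 3`. Among the four colours on an edge,
some three are equal or sum to `1`, so the triples that are monochromatic or have colour
sum `1` form a 3-cover. Exactly 12 of the 27 colourings of a fixed triple have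
this property, so a triple of `D(G)` lies in the cover with probability `4/9`, and some
colouring gives a cover of size at most `(4/9)|D(G)|`.
-/

open Finset

/-- With colour classes `V₀, V₁, V₂`, the triples of ordered types `(2,1,0)`, `(0,2,1)`,
`(1,0,2)` are exactly the non-monochromatic triples with colour sum `1`. -/
def IsMonoOrSumOne {ι : Type*} [Fintype ι] (g : ι → ZMod 3) : Prop :=
  (∃ a, ∀ i, g i = a) ∨ ∑ i, g i = 1

instance {ι : Type*} [Fintype ι] : DecidablePred (IsMonoOrSumOne (ι := ι)) :=
  fun _ => inferInstanceAs (Decidable (_ ∨ _))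

theorem isMonoOrSumOne_comp_equiv {ι κ : Type*} [Fintype ι] [Fintype κ] (e : κ ≃ ι)
    (g : ι → ZMod 3) : IsMonoOrSumOne (g ∘ e) ↔ IsMonoOrSumOne g := by
  simp [IsMonoOrSumOne, e.forall_congr_left, e.sum_comp]

theorem card_isMonoOrSumOne_of_card_eq_three {ι : Type*} [Fintype ι] [DecidableEq ι]
    (hι : Fintype.card ι = 3) : #{g : ι → ZMod 3 | IsMonoOrSumOne g} = 12 := by
  have e := Fintype.equivFinOfCardEq hι
  calc #{g : ι → ZMod 3 | IsMonoOrSumOne g}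
      = #{g : Fin 3 → ZMod 3 | IsMonoOrSumOne g} := by
        refine card_equiv (e.arrowCongr (Equiv.refl _)) fun g => ?_
        simp only [mem_filter, mem_univ, true_and]
        exact (isMonoOrSumOne_comp_equiv e.symm g).symm
    _ = 12 := by decide

theorem isMonoOrSumOne_triple_iff {α : Type*} [DecidableEq α] (f : α → ZMod 3) {a b c : α}
    (hab : a ≠ b) (hac : a ≠ c) (hbc : b ≠ c) :
    IsMonoOrSumOne (fun x : ({a, b, c} : Finset α) => f x) ↔
      (f a = f b ∧ f b = f c) ∨ f a + f b + f c = 1 := by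
  rw [IsMonoOrSumOne, sum_coe_sort {a, b, c} f, sum_insert (by simp [hab, hac]),
    sum_pair hbc, ← add_assoc]
  simp only [Subtype.forall, mem_insert, mem_singleton, forall_eq_or_imp, forall_eq]
  constructor
  · rintro (⟨d, ha, hb, hc⟩ | h)
    · exact Or.inl ⟨ha.trans hb.symm, hb.trans hc.symm⟩
    · exact Or.inr h
  · rintro (⟨h1, h2⟩ | h)
    · exact Or.inl ⟨f c, h1.trans h2, h2, rfl⟩
    · exact Or.inr h

theorem exists_triple_isMonoOrSumOne {α : Type*} [DecidableEq α] (f : α → ZMod 3)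
    {e : Finset α} (he : #e = 4) :
    ∃ t ⊆ e, #t = 3 ∧ IsMonoOrSumOne (fun x : t => f x) := by
  obtain ⟨a, s, has, rfl, hs⟩ := card_eq_succ.mp he
  obtain ⟨b, c, d, hbc, hbd, hcd, rfl⟩ := card_eq_three.mp hs
  simp only [mem_insert, mem_singleton, not_or] at has
  obtain ⟨hab, hac, had⟩ := has
  have hvalues : ∀ x y z w : ZMod 3,
      ((x = y ∧ y = z) ∨ x + y + z = 1) ∨ ((x = y ∧ y = w) ∨ x + y + w = 1) ∨
      ((x = z ∧ z = w) ∨ x + z + w = 1) ∨ ((y = z ∧ z = w) ∨ y + z + w = 1) := by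
    decide
  rcases hvalues (f a) (f b) (f c) (f d) with h | h | h | h
  · exact ⟨{a, b, c}, by grind, card_eq_three.mpr ⟨a, b, c, hab, hac, hbc, rfl⟩,
      (isMonoOrSumOne_triple_iff f hab hac hbc).mpr h⟩
  · exact ⟨{a, b, d}, by grind, card_eq_three.mpr ⟨a, b, d, hab, had, hbd, rfl⟩,
      (isMonoOrSumOne_triple_iff f hab had hbd).mpr h⟩
  · exact ⟨{a, c, d}, by grind, card_eq_three.mpr ⟨a, c, d, hac, had, hcd, rfl⟩,
      (isMonoOrSumOne_triple_iff f hac had hcd).mpr h⟩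
  · exact ⟨{b, c, d}, by grind, card_eq_three.mpr ⟨b, c, d, hbc, hbd, hcd, rfl⟩,
      (isMonoOrSumOne_triple_iff f hbc hbd hcd).mpr h⟩

theorem card_filter_comp_embedding {α β K : Type*} [Fintype α] [DecidableEq α] [Fintype β]
    [DecidableEq β] [Fintype K] (ι : β ↪ α) (P : (β → K) → Prop) [DecidablePred P] :
    #{c : α → K | P (c ∘ ι)} * Fintype.card K ^ Fintype.card β
      = #{g : β → K | P g} * Fintype.card K ^ Fintype.card α := by
  classical
  let C := {a // a ∉ Set.range ι}
  let σ : β ⊕ C ≃ α :=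
    (Equiv.sumCongr (Equiv.ofInjective ι ι.injective) (Equiv.refl C)).trans
      (Equiv.sumCompl (· ∈ Set.range ι))
  let split : (α → K) ≃ (β → K) × (C → K) :=
    (σ.arrowCongr (Equiv.refl K)).symm.trans (Equiv.sumArrowEquivProdArrow β C K)
  have hcard : #{c : α → K | P (c ∘ ι)} = #{g : β → K | P g} * Fintype.card (C → K) := by
    calc #{c : α → K | P (c ∘ ι)}
        = #{x : (β → K) × (C → K) | P x.1} :=
          card_equiv split fun c => by simp only [mem_filter, mem_univ, true_and]; rfl
      _ = #{g : β → K | P g} * Fintype.card (C → K) := by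
        rw [← univ_product_univ, filter_product_left, card_product, card_univ]
  have hα : Fintype.card α = Fintype.card β + Fintype.card C := by
    rw [← Fintype.card_sum, Fintype.card_congr σ]
  rw [hcard, hα, Fintype.card_fun, pow_add]
  ring

theorem card_filter_isMonoOrSumOne_extend {α : Type*} [DecidableEq α] {W t : Finset α}
    (htW : t ⊆ W) (ht : #t = 3) :
    #{c : W → ZMod 3 | IsMonoOrSumOne (fun x : t => Function.extend Subtype.val c 0 x)} * 9
      = 4 * 3 ^ #W := by
  let ι : t ↪ W := ⟨fun x => ⟨x, htW x.2⟩, fun x y h => Subtype.ext (by simpa using h)⟩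
  have hrestrict : ∀ c : W → ZMod 3, (fun x : t => Function.extend Subtype.val c 0 x) = c ∘ ι :=
    fun c => funext fun x => Subtype.val_injective.extend_apply c 0 (ι x)
  have hcount := card_filter_comp_embedding ι (IsMonoOrSumOne (ι := t))
  rw [card_isMonoOrSumOne_of_card_eq_three (by simpa using ht), Fintype.card_coe,
    Fintype.card_coe, ht, ZMod.card] at hcount
  simp only [hrestrict]
  omega

theorem exists_card_filter_mul_le {Ω β : Type*} [Fintype Ω] [Nonempty Ω] (D : Finset β)
    (P : Ω → β → Prop) [∀ ω t, Decidable (P ω t)] (p q : ℕ)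
    (h : ∀ t ∈ D, #{ω | P ω t} * q ≤ p * Fintype.card Ω) :
    ∃ ω, #{t ∈ D | P ω t} * q ≤ p * #D := by
  have hsum : ∑ ω, #{t ∈ D | P ω t} * q ≤ ∑ _ω : Ω, p * #D := by
    calc ∑ ω, #{t ∈ D | P ω t} * q
        = ∑ t ∈ D, #{ω | P ω t} * q := by
          rw [← sum_mul, ← sum_mul]
          exact congrArg (· * q) (sum_card_bipartiteAbove_eq_sum_card_bipartiteBelow (r := P))
      _ ≤ ∑ _t ∈ D, p * Fintype.card Ω := sum_le_sum h
      _ = ∑ _ω : Ω, p * #D := by simp only [sum_const, card_univ, smul_eq_mul]; ring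
  obtain ⟨ω, -, hω⟩ := exists_le_of_sum_le univ_nonempty hsum
  exact ⟨ω, hω⟩

theorem mem_Dset {G : Finset (Finset V)} {m : ℕ} {t : Finset V} :
    t ∈ Dset G m ↔ ∃ e ∈ G, t ⊆ e ∧ #t = m := by
  simp [Dset]

theorem tauM_le_card {α : Type*} {G : Finset (Finset α)} {m : ℕ} {C : Finset (Finset α)}
    (hC : IsMCover G m C) : tauM G m ≤ #C :=
  Nat.sInf_le ⟨C, hC, rfl⟩

theorem isMCover_filter_isMonoOrSumOne {G : Finset (Finset V)} (hG : ∀ e ∈ G, #e = 4)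
    (f : V → ZMod 3) :
    IsMCover G 3 {t ∈ Dset G 3 | IsMonoOrSumOne (fun x : t => f x)} := by
  refine ⟨fun t ht => ?_, fun e he => ?_⟩
  · obtain ⟨-, -, -, ht⟩ := mem_Dset.mp (mem_filter.mp ht).1
    exact ht
  · obtain ⟨t, hte, ht, hgood⟩ := exists_triple_isMonoOrSumOne f (hG e he)
    exact ⟨t, mem_filter.mpr ⟨mem_Dset.mpr ⟨e, he, hte, ht⟩, hgood⟩, hte⟩

theorem stmt5 (G : Finset (Finset V)) (hG : ∀ e ∈ G, e.card = 4) :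
    (tauM G 3 : ℝ) ≤ (4 / 9 : ℝ) * ((Dset G 3).card : ℝ) := by
  let W : Finset V := G.biUnion id
  let extend (c : W → ZMod 3) : V → ZMod 3 := Function.extend Subtype.val c 0
  have hprob : ∀ t ∈ Dset G 3,
      #{c : W → ZMod 3 | IsMonoOrSumOne (fun x : t => extend c x)} * 9
        ≤ 4 * Fintype.card (W → ZMod 3) := by
    intro t ht
    obtain ⟨e, he, hte, ht3⟩ := mem_Dset.mp ht
    rw [Fintype.card_fun, ZMod.card, Fintype.card_coe]
    exact (card_filter_isMonoOrSumOne_extend (hte.trans (subset_biUnion_of_mem id he)) ht3).le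
  obtain ⟨c, hc⟩ := exists_card_filter_mul_le (Dset G 3)
    (fun c t => IsMonoOrSumOne (fun x : t => extend c x)) 4 9 hprob
  have htau := tauM_le_card (isMCover_filter_isMonoOrSumOne hG (extend c))
  have h9 : (tauM G 3 : ℝ) * 9 ≤ 4 * #(Dset G 3) := by
    exact_mod_cast (Nat.mul_le_mul_right 9 htau).trans hc
  linarith
end

section
/- In the Frankl–Rödl construction, each family C_j is an (r-1)-cover: let G be an r-uniform hypergraph, (V_0,...,V_{l-1}) a partition of V(G), d(A) the number of indices i with A∩V_i = ∅, and w(A) = Σ_i i|A∩V_i|. For each j ∈ {0,...,l-1}, the family C_j = {σ : σ is an (r-1)-subset of some edge and (w(σ)+j) mod l ∈ {0,1,...,d(σ)}} is such that every edge of G contains a member of C_j. -/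
variable {V : Type*} [DecidableEq V]

/-- Number of blocks (fibers of the block-assignment `B`) disjoint from `A`. -/
def dBlocks {l : ℕ} (B : V → Fin l) (A : Finset V) : ℕ :=
  (Finset.univ.filter fun i : Fin l => ∀ v ∈ A, B v ≠ i).card

/-- `w(A) = Σ_i i·|A ∩ V_i| = Σ_{v ∈ A} (block of v)`. -/
def wSum {l : ℕ} (B : V → Fin l) (A : Finset V) : ℕ :=
  ∑ v ∈ A, (B v : ℕ)

/-- Frankl–Rödl: each family `C_j` is an `(r-1)`-cover: every edge contains an
`(r-1)`-subset `σ` with `(w(σ)+j) mod l ∈ {0,…,d(σ)}`. -/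
theorem stmt7 (r l : ℕ) (hr : 1 ≤ r) (hl : 0 < l) (G : Finset (Finset V))
    (hG : ∀ e ∈ G, e.card = r) (B : V → Fin l) (j : ℕ) (hj : j < l) :
    ∀ e ∈ G, ∃ σ ⊆ e, σ.card = r - 1 ∧
      (wSum B σ + j) % l ≤ dBlocks B σ := by
  intro e he
  have hcard := hG e he
  have hne : e.Nonempty := Finset.card_pos.mp (by omega)
  obtain ⟨v0, hv0⟩ := hne
  set s := wSum B e + j with hs
  set F : Finset (Fin l) := Finset.univ.filter (fun i => ∀ v ∈ e, B v ≠ i) with hF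
  set d := F.card with hdd
  have hdlt : d < l := by
    have hv : B v0 ∉ F := by
      simp only [hF, Finset.mem_filter]
      rintro ⟨-, h⟩
      exact h v0 hv0 rfl
    have hss : F ⊂ Finset.univ :=
      ⟨Finset.subset_univ F, fun h => hv (h (Finset.mem_univ _))⟩
    calc d < Finset.univ.card := Finset.card_lt_card hss
      _ = l := by simp
  let b : ℕ → Fin l := fun m => ⟨(s + l - m) % l, Nat.mod_lt _ hl⟩
  have hinj : Set.InjOn b (Finset.range (d + 1)) := by
    intro m1 h1 m2 h2 hb
    simp only [Finset.coe_range, Set.mem_Iio] at h1 h2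
    have hb' : (s + l - m1) % l = (s + l - m2) % l := congrArg Fin.val hb
    rcases le_total m1 m2 with h | h
    · have h12 : s + l - m2 ≤ s + l - m1 := by omega
      have hdvd : l ∣ (s + l - m1) - (s + l - m2) :=
        (Nat.modEq_iff_dvd' h12).mp hb'.symm
      have heq : (s + l - m1) - (s + l - m2) = m2 - m1 := by omega
      rw [heq] at hdvd
      rcases Nat.eq_zero_or_pos (m2 - m1) with h0 | hpos
      · omega
      · have := Nat.le_of_dvd hpos hdvd; omega
    · have h12 : s + l - m1 ≤ s + l - m2 := by omega
      have hdvd : l ∣ (s + l - m2) - (s + l - m1) :=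
        (Nat.modEq_iff_dvd' h12).mp hb'
      have heq : (s + l - m2) - (s + l - m1) = m1 - m2 := by omega
      rw [heq] at hdvd
      rcases Nat.eq_zero_or_pos (m1 - m2) with h0 | hpos
      · omega
      · have := Nat.le_of_dvd hpos hdvd; omega
  have hcardS : ((Finset.range (d + 1)).image b).card = d + 1 := by
    rw [Finset.card_image_of_injOn hinj, Finset.card_range]
  have hex : ∃ i ∈ (Finset.range (d + 1)).image b, i ∉ F := by
    by_contra h
    push_neg at h
    have := Finset.card_le_card h
    omega
  obtain ⟨i, hiS, hiF⟩ := hex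
  obtain ⟨m, hm, hbm⟩ := Finset.mem_image.mp hiS
  have hmle : m ≤ d := Nat.lt_succ_iff.mp (Finset.mem_range.mp hm)
  have hx : ∃ x ∈ e, B x = i := by
    by_contra hc
    push_neg at hc
    exact hiF (Finset.mem_filter.mpr ⟨Finset.mem_univ _, fun v hv => hc v hv⟩)
  obtain ⟨x, hxe, hBxi⟩ := hx
  have hc : (B x : ℕ) = (s + l - m) % l := by rw [hBxi, ← hbm]
  set c := (s + l - m) % l with hcdef
  -- B x ≤ wSum e
  have hwx : wSum B (e.erase x) + (B x : ℕ) = wSum B e := by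
    simpa [wSum] using Finset.sum_erase_add e (fun v => (B v : ℕ)) hxe
  have hcs : c ≤ s := by omega
  -- mod computation
  have h1 : (c + m) % l = s % l := by
    have hml : m ≤ l := le_of_lt (lt_of_le_of_lt hmle hdlt)
    calc (c + m) % l = ((s + l - m) % l + m) % l := rfl
      _ = (s + l - m + m) % l := by rw [Nat.mod_add_mod]
      _ = (s + l) % l := by rw [Nat.sub_add_cancel (by omega)]
      _ = s % l := Nat.add_mod_right s l
  have key : (s - c) % l = m := by
    have h4 : (s - c) + (c + m) ≡ (s - c) + s [MOD l] := Nat.ModEq.add_left _ h1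
    have h2 : (s - c) + (c + m) = s + m := by omega
    rw [h2] at h4
    have h5 : s + m ≡ s + (s - c) [MOD l] := by
      calc s + m ≡ (s - c) + s [MOD l] := h4
        _ = s + (s - c) := by omega
    have h6 : m ≡ s - c [MOD l] := Nat.ModEq.add_left_cancel' s h5
    have := h6.symm
    unfold Nat.ModEq at this
    rw [this, Nat.mod_eq_of_lt (lt_of_le_of_lt hmle hdlt)]
  have hmono : d ≤ dBlocks B (e.erase x) := by
    apply Finset.card_le_card
    intro i hi
    simp only [hF, Finset.mem_filter] at hi ⊢
    exact ⟨hi.1, fun v hv => hi.2 v (Finset.mem_of_mem_erase hv)⟩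
  refine ⟨e.erase x, Finset.erase_subset _ _, ?_, ?_⟩
  · rw [Finset.card_erase_of_mem hxe, hcard]
  · have hws : wSum B (e.erase x) + j = s - c := by omega
    rw [hws, key]
    exact le_trans hmle hmono
end

section
/- For each σ ∈ D(G), σ belongs to exactly d(σ) + 1 of the Frankl–Rödl families C_0, ..., C_{l-1}, and consequently Σ_{j=0}^{l-1} |C_j| = |D(G)| + Σ_{i=0}^{l-1} |{σ ∈ D(G) : σ ∩ V_i = ∅}|. -/
variable {V : Type*} [DecidableEq V]

lemma count_resid (l w d : ℕ) (hl : 0 < l) (hd : d < l) :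
    ((Finset.range l).filter fun j => (w + j) % l ≤ d).card = d + 1 := by
  have key : ∀ m < l, (w + (m + (l - w % l)) % l) % l = m := by
    intro m hm
    have hwm : w % l < l := Nat.mod_lt _ hl
    have h1 : (w + (m + (l - w % l)) % l) ≡ w + (m + (l - w % l)) [MOD l] :=
      (Nat.mod_modEq _ l).add_left w
    have h2 : w + (m + (l - w % l)) ≡ w % l + (m + (l - w % l)) [MOD l] :=
      ((Nat.mod_modEq w l).symm).add_right _
    have h3 : w % l + (m + (l - w % l)) = m + l := by omega
    have : (w + (m + (l - w % l)) % l) % l = (m + l) % l := h1.trans (h2.trans (by rw [h3]))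
    rw [this, Nat.add_mod_right, Nat.mod_eq_of_lt hm]
  rw [show d + 1 = (Finset.range (d+1)).card from (Finset.card_range _).symm]
  apply Finset.card_bij (fun j _ => (w + j) % l)
  · intro j hj
    simp only [Finset.mem_filter, Finset.mem_range] at hj ⊢
    omega
  · intro j1 h1 j2 h2 heq
    simp only [Finset.mem_filter, Finset.mem_range] at h1 h2
    have h : j1 % l = j2 % l := Nat.ModEq.add_left_cancel' w heq
    rwa [Nat.mod_eq_of_lt h1.1, Nat.mod_eq_of_lt h2.1] at h
  · intro m hm
    simp only [Finset.mem_range] at hm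
    have hml : m < l := lt_of_lt_of_le hm hd
    refine ⟨(m + (l - w % l)) % l, ?_, key m hml⟩
    simp only [Finset.mem_filter, Finset.mem_range]
    exact ⟨Nat.mod_lt _ hl, by rw [key m hml]; omega⟩

/-- Each `σ ∈ D(G)` lies in exactly `d(σ)+1` of the Frankl–Rödl families
`C_0, …, C_{l-1}`, and consequently `Σ_j |C_j| = |D(G)| + Σ_i |{σ : σ ∩ V_i = ∅}|`. -/
theorem stmt8 (r l : ℕ) (hr : 2 ≤ r) (hl : 0 < l) (G : Finset (Finset V))
    (hG : ∀ e ∈ G, e.card = r) (B : V → Fin l) :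
    (∀ σ ∈ Dset G (r - 1),
      ((Finset.range l).filter fun j =>
          (wSum B σ + j) % l ≤ dBlocks B σ).card = dBlocks B σ + 1) ∧
    (∑ j ∈ Finset.range l,
        ((Dset G (r - 1)).filter fun σ =>
          (wSum B σ + j) % l ≤ dBlocks B σ).card)
      = (Dset G (r - 1)).card +
        ∑ i : Fin l, ((Dset G (r - 1)).filter fun σ => ∀ v ∈ σ, B v ≠ i).card := by
  have hdlt : ∀ σ ∈ Dset G (r - 1), dBlocks B σ < l := by
    intro σ hσ
    simp only [Dset, Finset.mem_biUnion, Finset.mem_powersetCard] at hσ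
    obtain ⟨e, he, hsub, hcard⟩ := hσ
    have hne : σ.Nonempty := by
      rw [← Finset.card_pos, hcard]; omega
    obtain ⟨v, hv⟩ := hne
    have hlt : (Finset.univ.filter fun i : Fin l => ∀ v ∈ σ, B v ≠ i) ⊂ Finset.univ := by
      refine Finset.ssubset_univ_iff.mpr ?_
      intro h
      have : B v ∈ Finset.univ.filter fun i : Fin l => ∀ v ∈ σ, B v ≠ i := by
        rw [h]; exact Finset.mem_univ _
      rw [Finset.mem_filter] at this
      exact this.2 v hv rfl
    have := Finset.card_lt_card hlt
    simpa [dBlocks] using this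
  have part1 : ∀ σ ∈ Dset G (r - 1),
      ((Finset.range l).filter fun j =>
          (wSum B σ + j) % l ≤ dBlocks B σ).card = dBlocks B σ + 1 :=
    fun σ hσ => count_resid l (wSum B σ) (dBlocks B σ) hl (hdlt σ hσ)
  refine ⟨part1, ?_⟩
  have swap1 : (∑ j ∈ Finset.range l,
        ((Dset G (r - 1)).filter fun σ =>
          (wSum B σ + j) % l ≤ dBlocks B σ).card)
      = ∑ σ ∈ Dset G (r - 1), (dBlocks B σ + 1) := by
    simp only [Finset.card_filter]
    rw [Finset.sum_comm]
    refine Finset.sum_congr rfl fun σ hσ => ?_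
    rw [← Finset.card_filter]
    exact part1 σ hσ
  rw [swap1, Finset.sum_add_distrib]
  have swap2 : (∑ σ ∈ Dset G (r - 1), dBlocks B σ)
      = ∑ i : Fin l, ((Dset G (r - 1)).filter fun σ => ∀ v ∈ σ, B v ≠ i).card := by
    simp only [dBlocks, Finset.card_filter]
    exact Finset.sum_comm
  rw [swap2]
  simp [add_comm]
end

section
/- The number T(r,l) of surjections-with-multiplicity-at-least-2 satisfies T(r,l) = l! Σ_{j=0}^{l} (-1)^j C(r-1, j) S(r-1-j, l-j), where S denotes Stirling numbers of the second kind; here T(r,l) is the number of functions from an (r-1)-element set onto l blocks such that every block has at least two preimages. -/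
/-!
Write `T(n, l)` for the number of maps `Fin n → Fin l` all of whose fibers have at least two
points. Looking at the fiber of the last point, which either keeps at least two points when that
point is removed or consists of it and exactly one partner, gives
`T(n+2, l+1) = (l+1) T(n+1, l+1) + (l+1)(n+1) T(n, l)`.
Pascal's rule, the Stirling recurrence and `j C(n+1, j) = (n+1) C(n, j-1)` show that the
alternating sum `c(n, l) = Σ_j (-1)^j C(n, j) S(n-j, l-j)` satisfies
`c(n+2, l+1) = (l+1) c(n+1, l+1) + (n+1) c(n, l)`, which is the recurrence of `T(n, l) / l!`;
the initial values for `n ≤ 1` and `l = 0` agree.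
-/

def stirling2 : ℕ → ℕ → ℕ
  | 0, 0 => 1
  | 0, _ + 1 => 0
  | _ + 1, 0 => 0
  | n + 1, k + 1 => (k + 1) * stirling2 n (k + 1) + stirling2 n k

open Finset
open scoped Nat

section Fibers

variable {m k : ℕ}

def fiberCard (g : Fin m → Fin k) (j : Fin k) : ℕ := #{x | g x = j}

def fibersGeTwo (m k : ℕ) : Finset (Fin m → Fin k) := {g | ∀ j, 2 ≤ fiberCard g j}

lemma fiberCard_snoc (g : Fin m → Fin k) (a j : Fin k) :
    fiberCard (Fin.snoc g a : Fin (m + 1) → Fin k) j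
      = fiberCard g j + if a = j then 1 else 0 := by
  simp only [fiberCard, card_filter, Fin.sum_univ_castSucc, Fin.snoc_castSucc, Fin.snoc_last]

lemma fiberCard_insertNth (x : Fin (m + 1)) (a : Fin k) (f : Fin m → Fin k) (j : Fin k) :
    fiberCard (x.insertNth a f : Fin (m + 1) → Fin k) j
      = (if a = j then 1 else 0) + fiberCard f j := by
  simp only [fiberCard, card_filter, Fin.sum_univ_succAbove _ x, Fin.insertNth_apply_same,
    Fin.insertNth_apply_succAbove]

lemma fiberCard_succAbove_comp (a : Fin (k + 1)) (h : Fin m → Fin k) (u : Fin k) :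
    fiberCard (a.succAbove ∘ h) (a.succAbove u) = fiberCard h u := by
  simp only [fiberCard, Function.comp_apply, Fin.succAbove_right_inj]

lemma fiberCard_succAbove_comp_self (a : Fin (k + 1)) (h : Fin m → Fin k) :
    fiberCard (a.succAbove ∘ h) a = 0 := by
  simp [fiberCard, Fin.succAbove_ne]

lemma sum_fiberCard (g : Fin m → Fin k) : ∑ j, fiberCard g j = m := by
  have := card_eq_sum_card_fiberwise (s := (univ : Finset (Fin m))) (t := univ) (f := g)
    fun _ _ => mem_univ _
  rwa [card_univ, Fintype.card_fin, eq_comm] at this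

lemma fibersGeTwo_eq_empty_of_lt (h : m < 2 * k) : fibersGeTwo m k = ∅ := by
  refine eq_empty_of_forall_notMem fun g hg => ?_
  have : ∑ _j : Fin k, 2 ≤ ∑ j, fiberCard g j := sum_le_sum fun j _ => (mem_filter.1 hg).2 j
  simp [sum_fiberCard] at this
  omega

lemma fibersGeTwo_succ_zero (m : ℕ) : fibersGeTwo (m + 1) 0 = ∅ :=
  eq_empty_of_forall_notMem fun g _ => (g 0).elim0

lemma card_fibersGeTwo_zero_zero : #(fibersGeTwo 0 0) = 1 := by decide

lemma card_fibersGeTwo_filter_last_eq (a : Fin k) :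
    #{g ∈ fibersGeTwo (m + 1) k | g (Fin.last m) = a}
      = #{g : Fin m → Fin k | ∀ j, 2 ≤ fiberCard g j + if a = j then 1 else 0} := by
  refine card_nbij' Fin.init (fun g => Fin.snoc g a) ?_ ?_ ?_ ?_
  · intro g hg
    simp only [fibersGeTwo, coe_filter, mem_filter, mem_univ, true_and, Set.mem_ofPred_eq] at hg ⊢
    intro j
    simpa [← hg.2, ← fiberCard_snoc, Fin.snoc_init_self] using hg.1 j
  · intro g hg
    simp only [fibersGeTwo, coe_filter, mem_filter, mem_univ, true_and, Set.mem_ofPred_eq] at hg ⊢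
    exact ⟨fun j => fiberCard_snoc g a j ▸ hg j, Fin.snoc_last _ _⟩
  · intro g hg
    simp only [coe_filter, Set.mem_ofPred_eq] at hg
    simp only [← hg.2, Fin.snoc_init_self]
  · intro g _
    exact Fin.init_snoc _ _

lemma card_filter_two_le_add_ite (a : Fin k) :
    #{g : Fin m → Fin k | ∀ j, 2 ≤ fiberCard g j + if a = j then 1 else 0}
      = #(fibersGeTwo m k)
        + #{g : Fin m → Fin k | fiberCard g a = 1 ∧ ∀ j ≠ a, 2 ≤ fiberCard g j} := by
  rw [← card_filter_add_card_filter_not (p := fun g => 2 ≤ fiberCard g a), filter_filter,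
    filter_filter, fibersGeTwo]
  congr 2 <;> ext g <;> simp only [mem_filter, mem_univ, true_and] <;> constructor
  · rintro ⟨hg, ha⟩ j
    by_cases hj : a = j
    · exact hj ▸ ha
    · simpa [hj] using hg j
  · intro hg
    exact ⟨fun j => (hg j).trans (Nat.le_add_right _ _), hg a⟩
  · rintro ⟨hg, ha⟩
    refine ⟨by have := hg a; simp at this; omega, fun j hj => by simpa [Ne.symm hj] using hg j⟩
  · rintro ⟨ha, hg⟩
    refine ⟨fun j => ?_, by omega⟩
    by_cases hj : a = j
    · simp [← hj, ha]
    · simpa [hj] using hg j (Ne.symm hj)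

lemma insertNth_succAbove_comp_eq_iff (x : Fin (m + 1)) (a : Fin (k + 1)) (h : Fin m → Fin k)
    (y : Fin (m + 1)) :
    x.insertNth (α := fun _ => Fin (k + 1)) a (a.succAbove ∘ h) y = a ↔ y = x := by
  refine x.succAboveCases ?_ (fun z => ?_) y
  · simp
  · simp [Fin.succAbove_ne]

lemma card_filter_fiberCard_eq_one (a : Fin (k + 1)) :
    #{g : Fin (m + 1) → Fin (k + 1) | fiberCard g a = 1 ∧ ∀ j ≠ a, 2 ≤ fiberCard g j}
      = (m + 1) * #(fibersGeTwo m k) := by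
  rw [show (m + 1) * #(fibersGeTwo m k) = #((univ : Finset (Fin (m + 1))) ×ˢ fibersGeTwo m k) by
    simp [card_product]]
  refine (card_bij (fun p _ => p.1.insertNth (α := fun _ => Fin (k + 1)) a (a.succAbove ∘ p.2))
    ?_ ?_ ?_).symm
  · rintro ⟨x, h⟩ hp
    simp only [fibersGeTwo, mem_product, mem_filter, mem_univ, true_and] at hp ⊢
    refine ⟨by simp [fiberCard_insertNth, fiberCard_succAbove_comp_self], fun j hj => ?_⟩
    obtain ⟨u, rfl⟩ := Fin.exists_succAbove_eq hj
    simpa [fiberCard_insertNth, fiberCard_succAbove_comp, Fin.succAbove_ne] using hp u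
  · rintro ⟨x, h⟩ - ⟨x', h'⟩ - hxh
    have hx : x = x' :=
      (insertNth_succAbove_comp_eq_iff x' a h' x).1 (hxh ▸ by simp)
    subst hx
    obtain ⟨-, hh⟩ := Fin.insertNth_injective2 hxh
    simpa using (Fin.succAbove_right_injective.comp_left hh : h = h')
  · intro g hg
    simp only [mem_filter, mem_univ, true_and] at hg
    obtain ⟨x, hx⟩ := card_eq_one.1 hg.1
    have hgx : ∀ y, g y = a ↔ y = x := fun y => by
      simpa using congrArg (y ∈ ·) hx
    choose h hh using fun z =>
      Fin.exists_succAbove_eq (mt (hgx (x.succAbove z)).1 (Fin.succAbove_ne x z))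
    have hg_eq : x.insertNth (α := fun _ => Fin (k + 1)) a (a.succAbove ∘ h) = g := by
      rw [Fin.insertNth_eq_iff]
      exact ⟨((hgx x).2 rfl).symm, funext hh⟩
    refine ⟨(x, h), ?_, hg_eq⟩
    simp only [fibersGeTwo, mem_product, mem_filter, mem_univ, true_and]
    intro u
    have := hg.2 (a.succAbove u) (Fin.succAbove_ne a u)
    rwa [← hg_eq, fiberCard_insertNth, fiberCard_succAbove_comp,
      if_neg (Fin.succAbove_ne a u).symm, zero_add] at this

lemma card_fibersGeTwo_succ_succ (m k : ℕ) :
    #(fibersGeTwo (m + 2) (k + 1))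
      = (k + 1) * #(fibersGeTwo (m + 1) (k + 1)) + (k + 1) * ((m + 1) * #(fibersGeTwo m k)) := by
  rw [card_eq_sum_card_fiberwise (f := fun g => g (Fin.last (m + 1))) (t := univ)
    fun _ _ => mem_univ _]
  simp only [card_fibersGeTwo_filter_last_eq, card_filter_two_le_add_ite,
    card_filter_fiberCard_eq_one, sum_add_distrib, sum_const, card_univ, Fintype.card_fin,
    smul_eq_mul]

end Fibers

lemma stirling2_succ_zero (n : ℕ) : stirling2 (n + 1) 0 = 0 := rfl

lemma stirling2_succ_succ (n k : ℕ) :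
    stirling2 (n + 1) (k + 1) = (k + 1) * stirling2 n (k + 1) + stirling2 n k := rfl

lemma choose_mul_stirling2_succ_sub_zero (n j : ℕ) :
    n.choose j * stirling2 (n + 1 - j) 0 = 0 := by
  rcases le_or_gt j n with h | h
  · rw [show n + 1 - j = n - j + 1 by omega, stirling2_succ_zero, mul_zero]
  · rw [Nat.choose_eq_zero_of_lt h, zero_mul]

lemma choose_mul_stirling2_sub_succ_sub (n l j : ℕ) (hj : j ≤ l) :
    ((n + 1).choose j * stirling2 (n + 2 - j) (l + 1 - j) : ℤ)
      = (n + 1).choose j * (((l : ℤ) + 1 - j) * stirling2 (n + 1 - j) (l + 1 - j)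
          + stirling2 (n + 1 - j) (l - j)) := by
  rcases le_or_gt j (n + 1) with h | h
  · rw [show n + 2 - j = n + 1 - j + 1 by omega, show l + 1 - j = l - j + 1 by omega,
      stirling2_succ_succ]
    push_cast [Nat.cast_sub hj]
    ring
  · simp [Nat.choose_eq_zero_of_lt h]

def stirlingAltSum (n l : ℕ) : ℤ :=
  ∑ j ∈ range (l + 1), (-1) ^ j * (n.choose j : ℤ) * stirling2 (n - j) (l - j)

lemma stirlingAltSum_succ_succ_eq_sub (n l : ℕ) :
    stirlingAltSum (n + 2) (l + 1)
      = ∑ j ∈ range (l + 2),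
          (-1) ^ j * ((n + 1).choose j : ℤ) * stirling2 (n + 2 - j) (l + 1 - j)
        - stirlingAltSum (n + 1) l := by
  rw [stirlingAltSum, stirlingAltSum, sum_range_succ' _ (l + 1), sum_range_succ' _ (l + 1),
    add_sub_right_comm, ← sum_sub_distrib]
  congr 1
  refine sum_congr rfl fun j _ => ?_
  rw [Nat.choose_succ_succ', show n + 2 - (j + 1) = n + 1 - j by omega,
    show l + 1 - (j + 1) = l - j by omega]
  push_cast
  ring

lemma sum_choose_mul_stirling2_sub_succ_sub (n l : ℕ) :
    ∑ j ∈ range (l + 2), (-1) ^ j * ((n + 1).choose j : ℤ) * stirling2 (n + 2 - j) (l + 1 - j)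
      = ∑ j ∈ range (l + 2), (-1) ^ j * ((n + 1).choose j : ℤ) * ((l + 1 - j : ℤ)
          * stirling2 (n + 1 - j) (l + 1 - j)) + stirlingAltSum (n + 1) l := by
  have htop : ((n + 1).choose (l + 1) * stirling2 (n + 2 - (l + 1)) 0 : ℤ) = 0 := by
    exact_mod_cast choose_mul_stirling2_succ_sub_zero (n + 1) (l + 1)
  rw [sum_range_succ _ (l + 1), sum_range_succ _ (l + 1), Nat.sub_self,
    mul_assoc _ _ (stirling2 _ 0 : ℤ), htop, stirlingAltSum]
  push_cast
  simp only [sub_self, zero_mul, mul_zero, add_zero, ← sum_add_distrib]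
  refine sum_congr rfl fun j hj => ?_
  rw [mul_assoc, choose_mul_stirling2_sub_succ_sub n l j (Nat.lt_succ_iff.1 (mem_range.1 hj))]
  ring

lemma sum_mul_choose_mul_stirling2 (n l : ℕ) :
    ∑ j ∈ range (l + 2),
        (-1) ^ j * (j : ℤ) * ((n + 1).choose j : ℤ) * stirling2 (n + 1 - j) (l + 1 - j)
      = -((n + 1) * stirlingAltSum n l) := by
  rw [sum_range_succ', stirlingAltSum, mul_sum, ← sum_neg_distrib]
  simp only [Nat.cast_zero, mul_zero, zero_mul, add_zero]
  refine sum_congr rfl fun j _ => ?_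
  have hchoose : ((n + 1 : ℕ) : ℤ) * n.choose j = (n + 1).choose (j + 1) * (j + 1 : ℕ) := by
    exact_mod_cast Nat.add_one_mul_choose_eq n j
  rw [show n + 1 - (j + 1) = n - j by omega, show l + 1 - (j + 1) = l - j by omega]
  push_cast at hchoose ⊢
  linear_combination ((-1) ^ j * (stirling2 (n - j) (l - j) : ℤ)) * hchoose

lemma stirlingAltSum_succ_succ (n l : ℕ) :
    stirlingAltSum (n + 2) (l + 1)
      = (l + 1) * stirlingAltSum (n + 1) (l + 1) + (n + 1) * stirlingAltSum n l := by
  rw [stirlingAltSum_succ_succ_eq_sub, sum_choose_mul_stirling2_sub_succ_sub, add_sub_cancel_right,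
    ← neg_neg ((n + 1 : ℤ) * _), ← sum_mul_choose_mul_stirling2, stirlingAltSum, mul_sum,
    ← sub_eq_add_neg, ← sum_sub_distrib]
  refine sum_congr rfl fun j _ => ?_
  ring

lemma stirlingAltSum_zero_zero : stirlingAltSum 0 0 = 1 := rfl

lemma stirlingAltSum_zero_succ (l : ℕ) : stirlingAltSum 0 (l + 1) = 0 :=
  sum_eq_zero fun j _ => by cases j <;> simp [stirling2]

lemma stirlingAltSum_succ_zero (n : ℕ) : stirlingAltSum (n + 1) 0 = 0 := by
  simp [stirlingAltSum, stirling2_succ_zero]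

lemma stirlingAltSum_one_succ (l : ℕ) : stirlingAltSum 1 (l + 1) = 0 := by
  rw [stirlingAltSum, sum_range_succ', sum_range_succ',
    sum_eq_zero fun j _ => by simp [Nat.choose_eq_zero_of_lt (show 1 < j + 2 by omega)]]
  simp [stirling2_succ_succ, stirling2]

theorem card_fibersGeTwo_eq (n l : ℕ) :
    (#(fibersGeTwo n l) : ℤ) = l ! * stirlingAltSum n l := by
  induction n using Nat.twoStepInduction generalizing l with
  | zero =>
    cases l with
    | zero => simp [card_fibersGeTwo_zero_zero, stirlingAltSum_zero_zero]
    | succ l => simp [fibersGeTwo_eq_empty_of_lt (show 0 < 2 * (l + 1) by omega),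
        stirlingAltSum_zero_succ]
  | one =>
    cases l with
    | zero => simp [fibersGeTwo_succ_zero, stirlingAltSum_succ_zero]
    | succ l => simp [fibersGeTwo_eq_empty_of_lt (show 1 < 2 * (l + 1) by omega),
        stirlingAltSum_one_succ]
  | more n ih₀ ih₁ =>
    cases l with
    | zero => simp [fibersGeTwo_succ_zero, stirlingAltSum_succ_zero]
    | succ l =>
      rw [card_fibersGeTwo_succ_succ, stirlingAltSum_succ_succ]
      push_cast
      rw [ih₀, ih₁, Nat.factorial_succ]
      push_cast
      ring

theorem stmt11_general (r l : ℕ) :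
    ((Finset.univ.filter fun g : Fin (r - 1) → Fin l =>
        ∀ i, 2 ≤ (Finset.univ.filter fun x => g x = i).card).card : ℤ)
    = (l.factorial : ℤ) *
        ∑ j ∈ Finset.range (l + 1),
          (-1 : ℤ) ^ j * ((r - 1).choose j : ℤ) * (stirling2 (r - 1 - j) (l - j) : ℤ) :=
  card_fibersGeTwo_eq (r - 1) l

/-- `T(r,l)`, the number of functions from an `(r-1)`-set onto `l` blocks with every
block having at least two preimages, equals
`l! Σ_{j=0}^{l} (-1)^j C(r-1,j) S(r-1-j, l-j)`. -/
theorem stmt11 (r l : ℕ) (hr : 1 ≤ r) :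
    ((Finset.univ.filter fun g : Fin (r - 1) → Fin l =>
        ∀ i, 2 ≤ (Finset.univ.filter fun x => g x = i).card).card : ℤ)
    = (l.factorial : ℤ) *
        ∑ j ∈ Finset.range (l + 1),
          (-1 : ℤ) ^ j * ((r - 1).choose j : ℤ) * (stirling2 (r - 1 - j) (l - j) : ℤ) :=
  stmt11_general r l
end

section
/- For each fixed integer r ≥ 6, the function η_r(d) = (1 - e^{-d}) / (1 - ((r-1)d+1)^{-1/(r-1)}) is weakly increasing on the interval 1/(r-1) ≤ d ≤ 2. -/
/-!
With `s = r - 1` and `z = s d`, `η'(d)` has the sign of `(z + 1) ^ (1 + 1 / s) - z - e ^ (z / s)`.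
Bounding `e ^ (z / s)` from above and `(z + 1) ^ (1 / s) = e ^ (log (z + 1) / s)` from below by
quadratic Taylor polynomials leaves a polynomial inequality in `s`, `z` and `log (z + 1)`. It is
affine and increasing in `s`, so it only has to be checked at the least admissible value
`max 5 (z / 2)` of `s`, where it follows from chord lower bounds for `log` between the nodes
`2, 6, 12, 27`.
-/

open Real Set

/-- The constant is `(1 + 4a + a²) / 4` for `a = 13 / 18`: square `e ^ y ≤ 1 + y + a y²` at
`y = x / 2 ≤ 1`, which is the cubic Taylor bound with `y³ ≤ y²`. -/
lemma exp_le_one_add_add_mul_sq {x : ℝ} (h0 : 0 ≤ x) (h2 : x ≤ 2) :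
    exp x ≤ 1 + x + 1429 / 1296 * x ^ 2 := by
  have hy0 : 0 ≤ x / 2 := by linarith
  have hy1 : x / 2 ≤ 1 := by linarith
  have hcubic := exp_bound' hy0 hy1 (n := 3) (by norm_num)
  norm_num [Finset.sum_range_succ, Nat.factorial] at hcubic
  have hhalf : exp (x / 2) ≤ 1 + x / 2 + 13 / 18 * (x / 2) ^ 2 := by
    nlinarith [mul_nonneg (mul_nonneg hy0 hy0) (by linarith : 0 ≤ 1 - x / 2)]
  calc exp x = exp (x / 2) ^ 2 := by rw [← exp_nat_mul]; ring_nf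
    _ ≤ (1 + x / 2 + 13 / 18 * (x / 2) ^ 2) ^ 2 := by gcongr
    _ ≤ 1 + x + 1429 / 1296 * x ^ 2 := by
      nlinarith [mul_nonneg (mul_nonneg hy0 hy0) (mul_nonneg hy0 (by linarith : 0 ≤ 1 - x / 2)),
        mul_nonneg (mul_nonneg hy0 hy0) (by linarith : 0 ≤ 1 - x / 2)]

lemma le_log_of_chord {a b x la lb : ℝ} (ha : 0 < a) (hab : a < b) (hax : a ≤ x) (hxb : x ≤ b)
    (hla : la ≤ log a) (hlb : lb ≤ log b) :
    ((b - x) * la + (x - a) * lb) / (b - a) ≤ log x := by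
  have hba : 0 < b - a := by linarith
  have hconc := strictConcaveOn_log_Ioi.concaveOn.2 (mem_Ioi.2 ha) (mem_Ioi.2 (ha.trans hab))
    (div_nonneg (sub_nonneg.2 hxb) hba.le) (div_nonneg (sub_nonneg.2 hax) hba.le)
    (by field_simp; ring)
  have hx : (b - x) / (b - a) * a + (x - a) / (b - a) * b = x := by field_simp; ring
  simp only [smul_eq_mul, hx] at hconc
  calc ((b - x) * la + (x - a) * lb) / (b - a)
      ≤ ((b - x) * log a + (x - a) * log b) / (b - a) := by gcongr
    _ = (b - x) / (b - a) * log a + (x - a) / (b - a) * log b := by ring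
    _ ≤ log x := hconc

lemma log_six_gt : 1.791 < log 6 := by
  rw [show (6 : ℝ) = 2 * 3 by norm_num, log_mul (by norm_num) (by norm_num)]
  linarith [log_two_gt_d9, log_three_gt_d9]

lemma log_twelve_gt : 2.484 < log 12 := by
  rw [show (12 : ℝ) = 2 * 6 by norm_num, log_mul (by norm_num) (by norm_num)]
  linarith [log_two_gt_d9, log_six_gt]

lemma log_twentySeven_gt : 3.294 < log 27 := by
  rw [show (27 : ℝ) = 3 ^ 3 by norm_num, log_pow]
  push_cast
  linarith [log_three_gt_d9]

/-- `s²` times the gap between the Taylor lower bound of `(z + 1) e ^ (L / s)` and the upper bound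
`exp_le_one_add_add_mul_sq` of `z + e ^ (z / s)`. -/
noncomputable def taylorGap (s z L : ℝ) : ℝ :=
  (z + 1) * (L * s + L ^ 2 / 2) - (z * s + 1429 / 1296 * z ^ 2)

lemma taylorGap_le_of_log_le {s z l L : ℝ} (hs : 0 ≤ s) (hz : -1 ≤ z) (hl : 0 ≤ l)
    (hlL : l ≤ L) :
    taylorGap s z l ≤ taylorGap s z L := by
  unfold taylorGap
  gcongr
  linarith

lemma taylorGap_le_of_scale_le {s₀ s z L : ℝ} (hs : s₀ ≤ s) (hslope : z ≤ (z + 1) * L) :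
    taylorGap s₀ z L ≤ taylorGap s z L := by
  unfold taylorGap
  nlinarith [mul_nonneg (sub_nonneg.2 hs) (sub_nonneg.2 hslope)]

lemma taylorGap_nonneg_of_chord {s z a b la lb : ℝ} (hs : 0 ≤ s) (ha : 0 < a) (hab : a < b)
    (hza : a ≤ z + 1) (hzb : z + 1 ≤ b) (hla : la ≤ log a) (hlb : lb ≤ log b)
    (hchord : 0 ≤ ((b - (z + 1)) * la + (z + 1 - a) * lb) / (b - a))
    (hgap : 0 ≤ taylorGap s z (((b - (z + 1)) * la + (z + 1 - a) * lb) / (b - a))) :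
    0 ≤ taylorGap s z (log (z + 1)) :=
  hgap.trans <| taylorGap_le_of_log_le hs (by linarith) hchord <|
    le_log_of_chord ha hab hza hzb hla hlb

lemma taylorGap_five_nonneg {z : ℝ} (h1 : 1 ≤ z) (h10 : z ≤ 10) :
    0 ≤ taylorGap 5 z (log (z + 1)) := by
  rcases le_total z 5 with h5 | h5
  · refine taylorGap_nonneg_of_chord (a := 2) (b := 6) (la := 0.693) (lb := 1.791) (by norm_num)
      (by norm_num) (by norm_num) (by linarith) (by linarith) (by linarith [log_two_gt_d9])
      log_six_gt.le (by linarith) ?_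
    unfold taylorGap
    nlinarith [mul_nonneg (sub_nonneg.2 h1) (sub_nonneg.2 h5),
      mul_nonneg (mul_nonneg (sub_nonneg.2 h1) (sub_nonneg.2 h5)) (sub_nonneg.2 h1)]
  · refine taylorGap_nonneg_of_chord (a := 6) (b := 12) (la := 1.791) (lb := 2.484) (by norm_num)
      (by norm_num) (by norm_num) (by linarith) (by linarith) log_six_gt.le log_twelve_gt.le
      (by linarith) ?_
    unfold taylorGap
    nlinarith [mul_nonneg (sub_nonneg.2 h5) (sub_nonneg.2 h10),
      mul_nonneg (mul_nonneg (sub_nonneg.2 h5) (sub_nonneg.2 h10)) (sub_nonneg.2 h5)]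

lemma taylorGap_half_nonneg {z : ℝ} (h10 : 10 ≤ z) :
    0 ≤ taylorGap (z / 2) z (log (z + 1)) := by
  rcases le_total z 11 with h11 | h11
  · refine taylorGap_nonneg_of_chord (a := 6) (b := 12) (la := 1.791) (lb := 2.484) (by linarith)
      (by norm_num) (by norm_num) (by linarith) (by linarith) log_six_gt.le log_twelve_gt.le
      (by linarith) ?_
    unfold taylorGap
    nlinarith [mul_nonneg (sub_nonneg.2 h10) (sub_nonneg.2 h11),
      mul_nonneg (mul_nonneg (sub_nonneg.2 h10) (sub_nonneg.2 h11)) (sub_nonneg.2 h10)]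
  rcases le_total z 26 with h26 | h26
  · refine taylorGap_nonneg_of_chord (a := 12) (b := 27) (la := 2.484) (lb := 3.294) (by linarith)
      (by norm_num) (by norm_num) (by linarith) (by linarith) log_twelve_gt.le
      log_twentySeven_gt.le (by linarith) ?_
    unfold taylorGap
    nlinarith [mul_nonneg (sub_nonneg.2 h11) (sub_nonneg.2 h26),
      mul_nonneg (mul_nonneg (sub_nonneg.2 h11) (sub_nonneg.2 h26)) (sub_nonneg.2 h11)]
  · have hL : 3.294 ≤ log (z + 1) :=
      log_twentySeven_gt.le.trans (log_le_log (by norm_num) (by linarith))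
    refine le_trans ?_ (taylorGap_le_of_log_le (by linarith) (by linarith) (by norm_num) hL)
    unfold taylorGap
    nlinarith

lemma taylorGap_nonneg {s z : ℝ} (hs : 5 ≤ s) (h1 : 1 ≤ z) (hzs : z ≤ 2 * s) :
    0 ≤ taylorGap s z (log (z + 1)) := by
  have hslope : z ≤ (z + 1) * log (z + 1) := by
    have hz : 0 < z + 1 := by linarith
    calc z = (z + 1) * (1 - (z + 1)⁻¹) := by field_simp; ring
      _ ≤ (z + 1) * log (z + 1) := by gcongr; exact one_sub_inv_le_log_of_pos hz
  rcases le_total z 10 with h10 | h10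
  · exact (taylorGap_five_nonneg h1 h10).trans (taylorGap_le_of_scale_le hs hslope)
  · exact (taylorGap_half_nonneg h10).trans (taylorGap_le_of_scale_le (by linarith) hslope)

theorem add_exp_div_le_rpow {s z : ℝ} (hs : 5 ≤ s) (h1 : 1 ≤ z) (hzs : z ≤ 2 * s) :
    z + exp (z / s) ≤ (z + 1) ^ (1 + 1 / s) := by
  have hs0 : 0 < s := by linarith
  set L := log (z + 1)
  have hL : 0 ≤ L := log_nonneg (by linarith)
  have hexp_z := exp_le_one_add_add_mul_sq (x := z / s) (by positivity)
    ((div_le_iff₀ hs0).2 (by linarith))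
  have hexp_L := quadratic_le_exp_of_nonneg (div_nonneg hL hs0.le)
  have hgap := taylorGap_nonneg hs h1 hzs
  have hpow : (z + 1) ^ (1 + 1 / s) = (z + 1) * exp (L / s) := by
    rw [rpow_add (by linarith), rpow_one, rpow_def_of_pos (by linarith), mul_one_div]
  calc z + exp (z / s) ≤ z + (1 + z / s + 1429 / 1296 * (z / s) ^ 2) := by gcongr
    _ ≤ (z + 1) * (1 + L / s + (L / s) ^ 2 / 2) := by
      have hscaled : (z + 1) * (1 + L / s + (L / s) ^ 2 / 2)
          - (z + (1 + z / s + 1429 / 1296 * (z / s) ^ 2)) = taylorGap s z L / s ^ 2 := by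
        unfold taylorGap; field_simp; ring
      linarith [div_nonneg hgap (sq_nonneg s)]
    _ ≤ (z + 1) * exp (L / s) := by gcongr
    _ = (z + 1) ^ (1 + 1 / s) := hpow.symm

/-- `eta s` is `η_r` with `s = r - 1`. -/
noncomputable def eta (s d : ℝ) : ℝ := (1 - exp (-d)) / (1 - (s * d + 1) ^ (-1 / s))

noncomputable def etaDeriv (s d : ℝ) : ℝ :=
  (exp (-d) * (1 - (s * d + 1) ^ (-1 / s)) -
      (1 - exp (-d)) * ((s * d + 1) ^ (-1 / s) / (s * d + 1))) /
    (1 - (s * d + 1) ^ (-1 / s)) ^ 2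

lemma hasDerivAt_eta {s d : ℝ} (hs : 0 < s) (hd : 0 < d) :
    HasDerivAt (eta s)
      ((exp (-d) * (1 - (s * d + 1) ^ (-1 / s)) -
          (1 - exp (-d)) * ((s * d + 1) ^ (-1 / s) / (s * d + 1))) /
        (1 - (s * d + 1) ^ (-1 / s)) ^ 2) d := by
  have hQ : 0 < s * d + 1 := by positivity
  have hu : (s * d + 1) ^ (-1 / s) < 1 :=
    rpow_lt_one_of_one_lt_of_neg (by nlinarith) (div_neg_of_neg_of_pos (by norm_num) hs)
  have hnum : HasDerivAt (fun x => 1 - exp (-x)) (exp (-d)) d := by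
    simpa using ((hasDerivAt_neg d).exp).const_sub 1
  have hden : HasDerivAt (fun x => 1 - (s * x + 1) ^ (-1 / s))
      ((s * d + 1) ^ (-1 / s) / (s * d + 1)) d := by
    have hpow := (((hasDerivAt_id d).const_mul s).add_const 1).rpow_const (p := -1 / s)
      (Or.inl hQ.ne')
    refine (hpow.const_sub 1).congr_deriv ?_
    rw [id, rpow_sub_one hQ.ne']
    field_simp
  exact hnum.div hden (by linarith)

lemma etaDeriv_nonneg {s d : ℝ} (hs : 5 ≤ s) (hd1 : 1 / s ≤ d) (hd2 : d ≤ 2) :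
    0 ≤ etaDeriv s d := by
  have hs0 : 0 < s := by linarith
  have hz1 : 1 ≤ s * d := by rwa [div_le_iff₀' hs0] at hd1
  have hQ : 0 < s * d + 1 := by linarith
  have hcore := add_exp_div_le_rpow hs hz1 (by nlinarith)
  rw [mul_div_cancel_left₀ d hs0.ne', rpow_add hQ, rpow_one] at hcore
  unfold etaDeriv
  set u := (s * d + 1) ^ (-1 / s)
  have hu : u * (s * d + 1) ^ (1 / s) = 1 := by
    rw [← rpow_add hQ, neg_div, neg_add_cancel, rpow_zero]
  have hu0 : 0 < u := rpow_pos_of_pos hQ _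
  have hE : exp (-d) * exp d = 1 := by rw [← exp_add, neg_add_cancel, exp_zero]
  have hkey : u + exp (-d) * u * (s * d) ≤ exp (-d) * (s * d + 1) := by
    have hscaled := mul_le_mul_of_nonneg_left hcore (mul_pos (exp_pos (-d)) hu0).le
    have hl : exp (-d) * u * (s * d + exp d) = u + exp (-d) * u * (s * d) := by
      linear_combination u * hE
    have hr : exp (-d) * u * ((s * d + 1) * (s * d + 1) ^ (1 / s)) = exp (-d) * (s * d + 1) := by
      linear_combination exp (-d) * (s * d + 1) * hu
    linarith
  apply div_nonneg _ (sq_nonneg _)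
  have hnum : exp (-d) * (1 - u) - (1 - exp (-d)) * (u / (s * d + 1))
      = (exp (-d) * (s * d + 1) - (u + exp (-d) * u * (s * d))) / (s * d + 1) := by
    rw [eq_div_iff hQ.ne', sub_mul, mul_assoc (1 - exp (-d)), div_mul_cancel₀ _ hQ.ne']
    ring
  rw [hnum]
  exact div_nonneg (by linarith) hQ.le

theorem monotoneOn_eta {s : ℝ} (hs : 5 ≤ s) : MonotoneOn (eta s) (Icc (1 / s) 2) := by
  have hpos : ∀ d ∈ Icc (1 / s) 2, 0 < d := fun d hd =>
    lt_of_lt_of_le (one_div_pos.2 (by linarith)) hd.1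
  refine monotoneOn_of_hasDerivWithinAt_nonneg (convex_Icc _ _)
    (fun d hd => (hasDerivAt_eta (by linarith) (hpos d hd)).continuousAt.continuousWithinAt)
    (fun d hd => (hasDerivAt_eta (by linarith) (hpos d (interior_subset hd))).hasDerivWithinAt)
    (fun d hd => ?_)
  rw [interior_Icc] at hd
  exact etaDeriv_nonneg hs hd.1.le hd.2.le

/-- For each fixed `r ≥ 6`, `η_r(d) = (1 - e^{-d})/(1 - ((r-1)d+1)^{-1/(r-1)})` is
weakly increasing on `[1/(r-1), 2]`. -/
theorem stmt15 (r : ℕ) (hr : 6 ≤ r) (d1 d2 : ℝ)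
    (h1 : 1 / ((r : ℝ) - 1) ≤ d1) (h12 : d1 ≤ d2) (h2 : d2 ≤ 2) :
    (1 - Real.exp (-d1)) /
        (1 - (((r : ℝ) - 1) * d1 + 1) ^ (-(1 : ℝ) / ((r : ℝ) - 1))) ≤
      (1 - Real.exp (-d2)) /
        (1 - (((r : ℝ) - 1) * d2 + 1) ^ (-(1 : ℝ) / ((r : ℝ) - 1))) := by
  have hr' : (6 : ℝ) ≤ r := by exact_mod_cast hr
  exact monotoneOn_eta (by linarith) ⟨h1, h12.trans h2⟩ ⟨h1.trans h12, h2⟩ h12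
end

section
/- Consider the Giraud-type cover for 5-uniform hypergraphs: let G be a finite 5-uniform hypergraph, (V_0, V_1) a partition of V(G), and f : V_0 × V_1 → {0,1} any function. Define C to consist of all 4-subsets σ of edges of G such that either σ ⊆ V_0 or σ ⊆ V_1, or |σ ∩ V_0| = |σ ∩ V_1| = 2 and Σ_{(x,y) ∈ (σ∩V_0)×(σ∩V_1)} f(x,y) is even. Then C is a 4-cover of G: every edge of G contains a member of C. -/
/-! Split an edge `e` into `e ∩ V₀` and `e ∩ V₁`, of sizes summing to 5. If one part has at least
four vertices, a 4-subset of it lies in one block. Otherwise, up to swapping the blocks, the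
parts have sizes 2 and 3. For each of the three vertices `y` on the large side consider the
parity of `∑ x ∈ e ∩ V₀, f x y`; by pigeonhole two vertices `a ≠ b` give the same parity, so the
4-set `(e ∩ V₀) ∪ {a, b}` has `f`-sum `s + s = 0` in `ZMod 2`. -/

open Finset

section

variable {V : Type*} [DecidableEq V]

theorem card_inter_add_card_inter_of_subset_union {V0 V1 e : Finset V} (hdisj : Disjoint V0 V1)
    (he : e ⊆ V0 ∪ V1) : (e ∩ V0).card + (e ∩ V1).card = e.card := by
  rw [← card_union_of_disjoint (hdisj.mono inter_subset_right inter_subset_right),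
    ← inter_union_distrib_left, inter_eq_left.mpr he]

theorem union_inter_eq_left_of_disjoint {S T U : Finset V} (hS : S ⊆ U) (hT : Disjoint T U) :
    (S ∪ T) ∩ U = S := by
  rw [union_inter_distrib_right, inter_eq_left.mpr hS, disjoint_iff_inter_eq_empty.mp hT,
    union_empty]

theorem exists_even_square_of_card_inter_eq_two {V0 V1 e : Finset V} (hdisj : Disjoint V0 V1)
    (h0 : (e ∩ V0).card = 2) (h1 : 2 < (e ∩ V1).card) (f : V → V → ZMod 2) :
    ∃ σ ⊆ e, σ.card = 4 ∧ (σ ∩ V0).card = 2 ∧ (σ ∩ V1).card = 2 ∧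
      ∑ x ∈ σ ∩ V0, ∑ y ∈ σ ∩ V1, f x y = 0 := by
  obtain ⟨a, ha, b, hb, hab, hfab⟩ := exists_ne_map_eq_of_card_lt_of_maps_to
    (t := (univ : Finset (ZMod 2))) (by simpa using h1)
    (f := fun y => ∑ x ∈ e ∩ V0, f x y) (fun _ _ => mem_univ _)
  have hpair : {a, b} ⊆ e ∩ V1 := insert_subset ha (singleton_subset_iff.mpr hb)
  have hpairV1 : {a, b} ⊆ V1 := hpair.trans inter_subset_right
  have hσ0 : (e ∩ V0 ∪ {a, b}) ∩ V0 = e ∩ V0 :=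
    union_inter_eq_left_of_disjoint inter_subset_right (hdisj.symm.mono_left hpairV1)
  have hσ1 : (e ∩ V0 ∪ {a, b}) ∩ V1 = {a, b} := by
    rw [union_comm]
    exact union_inter_eq_left_of_disjoint hpairV1 (hdisj.mono_left inter_subset_right)
  refine ⟨e ∩ V0 ∪ {a, b}, union_subset inter_subset_left (hpair.trans inter_subset_left),
    ?_, by rw [hσ0, h0], by rw [hσ1, card_pair hab], ?_⟩
  · rw [card_union_of_disjoint (hdisj.mono inter_subset_right hpairV1), h0, card_pair hab]
  · simp only [hσ0, hσ1, sum_pair hab, sum_add_distrib]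
    rw [hfab, CharTwo.add_self_eq_zero]

end

/-- Giraud-type cover for 5-uniform hypergraphs: with a bipartition `(V₀, V₁)` and any
`f : V₀ × V₁ → ZMod 2`, every edge contains a 4-set that either lies in one block or
has type (2,2) with even `f`-sum. -/
theorem stmt18 {V : Type*} [DecidableEq V] (G : Finset (Finset V))
    (hG : ∀ e ∈ G, e.card = 5) (V0 V1 : Finset V) (hdisj : Disjoint V0 V1)
    (hcov : ∀ e ∈ G, e ⊆ V0 ∪ V1) (f : V → V → ZMod 2) :
    ∀ e ∈ G, ∃ σ ⊆ e, σ.card = 4 ∧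
      (σ ⊆ V0 ∨ σ ⊆ V1 ∨
        ((σ ∩ V0).card = 2 ∧ (σ ∩ V1).card = 2 ∧
          ∑ x ∈ σ ∩ V0, ∑ y ∈ σ ∩ V1, f x y = 0)) := by
  intro e he
  have hcard := card_inter_add_card_inter_of_subset_union hdisj (hcov e he)
  rw [hG e he] at hcard
  by_cases h0 : 4 ≤ (e ∩ V0).card
  · obtain ⟨σ, hσ, hσcard⟩ := exists_subset_card_eq h0
    exact ⟨σ, hσ.trans inter_subset_left, hσcard, .inl (hσ.trans inter_subset_right)⟩
  by_cases h1 : 4 ≤ (e ∩ V1).card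
  · obtain ⟨σ, hσ, hσcard⟩ := exists_subset_card_eq h1
    exact ⟨σ, hσ.trans inter_subset_left, hσcard, .inr (.inl (hσ.trans inter_subset_right))⟩
  rcases (by omega : (e ∩ V0).card = 2 ∨ (e ∩ V1).card = 2) with h0 | h1
  · obtain ⟨σ, hσ, hσcard, hσeven⟩ := exists_even_square_of_card_inter_eq_two hdisj h0 (by omega) f
    exact ⟨σ, hσ, hσcard, .inr (.inr hσeven)⟩
  · obtain ⟨σ, hσ, hσcard, hσ1, hσ0, hσeven⟩ :=
      exists_even_square_of_card_inter_eq_two hdisj.symm h1 (by omega) (fun y x => f x y)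
    rw [sum_comm] at hσeven
    exact ⟨σ, hσ, hσcard, .inr (.inr ⟨hσ0, hσ1, hσeven⟩)⟩
end

section
/- In the Sidorenko parity argument: let e be a set, V_0,...,V_{l-1} a partition with |e ∩ V_i| ≥ 2 for all i and |e ∩ V_{i_0}| ≥ 3 for some i_0, let x, y, z be three distinct elements of e ∩ V_{i_0}, and let q(A) = Σ f(x_0,...,x_{l-1}) summed over choices x_j ∈ A ∩ V_j of the designated 2-element sets, for f : V_0 × ··· × V_{l-1} → ℤ/2. Then q(π(e\{x})) + q(π(e\{y})) + q(π(e\{z})) = 0 in ℤ/2, where π(σ) selects the two maximal elements (in a fixed linear order) of σ ∩ V_j for each j. Consequently at least one of the three values q(π(e\{x})), q(π(e\{y})), q(π(e\{z})) is zero. -/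
variable {V : Type*} [Fintype V] [LinearOrder V]

/-- The `k` maximal elements of a finite set (fewer if the set is smaller). -/
def topTake (k : ℕ) (s : Finset V) : Finset V :=
  ((s.sort (· ≤ ·)).reverse.take k).toFinset

/-- `π(σ)`: the union over blocks `j` of the two maximal elements of `σ ∩ V_j`. -/
def piSel {l : ℕ} (B : V → Fin l) (σ : Finset V) : Finset V :=
  Finset.univ.biUnion fun j : Fin l => topTake 2 (σ.filter fun v => B v = j)

/-- `q(A) = Σ_{x_j ∈ A ∩ V_j} f(x_0, …, x_{l-1}) ∈ ℤ/2`. -/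
def qSum {l : ℕ} (B : V → Fin l) (f : (Fin l → V) → ZMod 2) (A : Finset V) : ZMod 2 :=
  ∑ t ∈ Finset.univ.filter fun t : Fin l → V => ∀ j, t j ∈ A ∧ B (t j) = j, f t


set_option linter.unusedSectionVars false



lemma topTake_subset (k : ℕ) (s : Finset V) : topTake k s ⊆ s := by
  intro a ha
  simp only [topTake, List.mem_toFinset] at ha
  have h1 : a ∈ (s.sort (· ≤ ·)).reverse := List.mem_of_mem_take ha
  rw [List.mem_reverse] at h1
  exact (Finset.mem_sort _).mp h1

lemma sortRev_nodup (s : Finset V) : (s.sort (· ≤ ·)).reverse.Nodup :=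
  List.nodup_reverse.mpr (s.sort_nodup (· ≤ ·))

lemma topTake_nodupList (k : ℕ) (s : Finset V) :
    ((s.sort (· ≤ ·)).reverse.take k).Nodup :=
  (sortRev_nodup s).sublist (List.take_sublist _ _)

lemma topTake_card (k : ℕ) (s : Finset V) : (topTake k s).card = min k s.card := by
  rw [topTake, List.toFinset_card_of_nodup (topTake_nodupList k s)]
  simp [List.length_take, Finset.length_sort]

lemma lt_of_notMem_topTake {k : ℕ} {s : Finset V} {a b : V}
    (ha : a ∈ topTake k s) (hb : b ∈ s) (hbn : b ∉ topTake k s) : b < a := by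
  set L := (s.sort (· ≤ ·)).reverse with hL
  have hnd : L.Nodup := sortRev_nodup s
  have hsorted : L.Pairwise (· ≥ ·) := by
    rw [hL, List.pairwise_reverse]
    exact s.pairwise_sort (· ≤ ·)
  have hbL : b ∈ L := by rw [hL, List.mem_reverse, Finset.mem_sort]; exact hb
  have hbt : b ∉ L.take k := by
    intro h; exact hbn (by simpa [topTake, List.mem_toFinset] using h)
  have hbd : b ∈ L.drop k := by
    have : b ∈ L.take k ++ L.drop k := by rw [List.take_append_drop]; exact hbL
    rcases List.mem_append.mp this with h | h
    · exact absurd h hbt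
    · exact h
  have haT : a ∈ L.take k := by simpa [topTake, List.mem_toFinset] using ha
  have hge : ∀ u ∈ L.take k, ∀ v ∈ L.drop k, u ≥ v := by
    have h2 : (L.take k ++ L.drop k).Pairwise (· ≥ ·) := by
      rw [List.take_append_drop]; exact hsorted
    exact (List.pairwise_append.mp h2).2.2
  have hne : ∀ u ∈ L.take k, ∀ v ∈ L.drop k, u ≠ v := by
    have h2 : (L.take k ++ L.drop k).Pairwise (· ≠ ·) := by
      rw [List.take_append_drop]; exact hnd
    exact (List.pairwise_append.mp h2).2.2
  exact lt_of_le_of_ne (hge a haT b hbd) (fun h => hne a haT b hbd h.symm)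

lemma topSet_unique {s A A' : Finset V} (hA : A ⊆ s) (hA' : A' ⊆ s)
    (hcard : A.card = A'.card)
    (h3 : ∀ a ∈ A, ∀ b ∈ s, b ∉ A → b < a)
    (h3' : ∀ a ∈ A', ∀ b ∈ s, b ∉ A' → b < a) : A = A' := by
  by_contra hne
  have h1 : ¬ A ⊆ A' := fun h => hne (Finset.eq_of_subset_of_card_le h (le_of_eq hcard.symm))
  have h2 : ¬ A' ⊆ A := fun h => hne (Finset.eq_of_subset_of_card_le h (le_of_eq hcard)).symm
  obtain ⟨a, haA, haA'⟩ := Finset.not_subset.mp h1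
  obtain ⟨a', ha'A', ha'A⟩ := Finset.not_subset.mp h2
  have l1 : a < a' := h3' a' ha'A' a (hA haA) haA'
  have l2 : a' < a := h3 a haA a' (hA' ha'A') ha'A
  exact absurd (l1.trans l2) (lt_irrefl a)

lemma topTake_erase_top3 {s : Finset V} (hs : 3 ≤ s.card) {w : V} (hw : w ∈ topTake 3 s) :
    topTake 2 (s.erase w) = (topTake 3 s).erase w := by
  have hws : w ∈ s := topTake_subset 3 s hw
  apply topSet_unique (topTake_subset 2 (s.erase w))
  · exact fun a ha => by
      rw [Finset.mem_erase] at ha ⊢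
      exact ⟨ha.1, topTake_subset 3 s ha.2⟩
  · rw [topTake_card, Finset.card_erase_of_mem hws,
      Finset.card_erase_of_mem hw, topTake_card]
    omega
  · exact fun a ha b hb hbn => lt_of_notMem_topTake ha hb hbn
  · intro a ha b hb hbn
    rw [Finset.mem_erase] at ha hb
    have hbnt : b ∉ topTake 3 s := fun h => hbn (Finset.mem_erase.mpr ⟨hb.1, h⟩)
    exact lt_of_notMem_topTake ha.2 hb.2 hbnt



lemma mem_piSel_iff {l : ℕ} {B : V → Fin l} {σ : Finset V} {v : V} {j : Fin l} :
    (v ∈ piSel B σ ∧ B v = j) ↔ v ∈ topTake 2 (σ.filter fun u => B u = j) := by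
  constructor
  · rintro ⟨hv, hB⟩
    simp only [piSel, Finset.mem_biUnion, Finset.mem_univ, true_and] at hv
    obtain ⟨j', hj'⟩ := hv
    have := topTake_subset _ _ hj'
    rw [Finset.mem_filter] at this
    rwa [show j = j' from by rw [← hB, this.2]]
  · intro h
    have hm := topTake_subset _ _ h
    rw [Finset.mem_filter] at hm
    exact ⟨by simp only [piSel, Finset.mem_biUnion, Finset.mem_univ, true_and]; exact ⟨j, h⟩,
      hm.2⟩

lemma qSum_piSel {l : ℕ} (B : V → Fin l) (f : (Fin l → V) → ZMod 2) (σ : Finset V) :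
    qSum B f (piSel B σ) =
      ∑ t ∈ Finset.univ.filter
        fun t : Fin l → V => ∀ j, t j ∈ topTake 2 (σ.filter fun u => B u = j), f t := by
  unfold qSum
  congr 1
  ext t
  simp only [Finset.mem_filter, Finset.mem_univ, true_and]
  constructor
  · intro h j; exact mem_piSel_iff.mp (h j)
  · intro h j; exact mem_piSel_iff.mpr (h j)


/-- Sidorenko's parity argument: if `x, y, z` are the three maximal elements of
`e ∩ V_{i₀}`, the three sums `q(π(e∖{x}))`, `q(π(e∖{y}))`, `q(π(e∖{z}))` add to `0`
in `ℤ/2`, so at least one of them vanishes. -/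
theorem stmt19 (l : ℕ) (hl : 0 < l) (B : V → Fin l) (f : (Fin l → V) → ZMod 2)
    (e : Finset V) (i0 : Fin l) (x y z : V)
    (hx : x ∈ e) (hy : y ∈ e) (hz : z ∈ e)
    (hxy : x ≠ y) (hxz : x ≠ z) (hyz : y ≠ z)
    (hblocks : ∀ i : Fin l, 2 ≤ (e.filter fun v => B v = i).card)
    (hi0 : 3 ≤ (e.filter fun v => B v = i0).card)
    (htop : ({x, y, z} : Finset V) = topTake 3 (e.filter fun v => B v = i0)) :
    qSum B f (piSel B (e.erase x)) + qSum B f (piSel B (e.erase y)) +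
        qSum B f (piSel B (e.erase z)) = 0 ∧
      (qSum B f (piSel B (e.erase x)) = 0 ∨ qSum B f (piSel B (e.erase y)) = 0 ∨
        qSum B f (piSel B (e.erase z)) = 0) := by
  classical
  -- block membership of x, y, z
  have hmem : ∀ w ∈ ({x, y, z} : Finset V), B w = i0 := by
    intro w hw
    have : w ∈ topTake 3 (e.filter fun v => B v = i0) := htop ▸ hw
    have := topTake_subset _ _ this
    exact (Finset.mem_filter.mp this).2
  -- the auxiliary function G
  set G : V → ZMod 2 := fun a =>
    ∑ t ∈ Finset.univ.filter fun t : Fin l → V =>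
      (∀ j, j ≠ i0 → t j ∈ topTake 2 (e.filter fun u => B u = j)) ∧ t i0 = a, f t with hG
  have main : ∀ w u v : V, w ∈ ({x, y, z} : Finset V) → u ≠ v →
      ({x, y, z} : Finset V).erase w = {u, v} →
      qSum B f (piSel B (e.erase w)) = G u + G v := by
    intro w u v hw huv heuv
    have hBw : B w = i0 := hmem w hw
    have hwtop : w ∈ topTake 3 (e.filter fun vv => B vv = i0) := htop ▸ hw
    have blockEq : ∀ j : Fin l, j ≠ i0 →
        ((e.erase w).filter fun uu => B uu = j) = e.filter fun uu => B uu = j := by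
      intro j hj
      rw [Finset.filter_erase]
      apply Finset.erase_eq_of_notMem
      intro hmem'
      exact hj (by rw [← (Finset.mem_filter.mp hmem').2, hBw])
    have blockI0 : topTake 2 ((e.erase w).filter fun uu => B uu = i0) = ({u, v} : Finset V) := by
      rw [Finset.filter_erase, topTake_erase_top3 hi0 hwtop, ← htop, heuv]
    rw [qSum_piSel]
    have hset : (Finset.univ.filter fun t : Fin l → V =>
          ∀ j, t j ∈ topTake 2 ((e.erase w).filter fun uu => B uu = j))
        = (Finset.univ.filter fun t : Fin l → V =>
            (∀ j, j ≠ i0 → t j ∈ topTake 2 (e.filter fun uu => B uu = j)) ∧ t i0 = u)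
          ∪ (Finset.univ.filter fun t : Fin l → V =>
            (∀ j, j ≠ i0 → t j ∈ topTake 2 (e.filter fun uu => B uu = j)) ∧ t i0 = v) := by
      ext t
      simp only [Finset.mem_filter, Finset.mem_union, Finset.mem_univ, true_and]
      constructor
      · intro h
        have hP : ∀ j, j ≠ i0 → t j ∈ topTake 2 (e.filter fun uu => B uu = j) := by
          intro j hj
          have := h j
          rwa [blockEq j hj] at this
        have hi := h i0
        rw [blockI0] at hi
        rcases Finset.mem_insert.mp hi with h' | h'
        · exact Or.inl ⟨hP, h'⟩
        · exact Or.inr ⟨hP, Finset.mem_singleton.mp h'⟩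
      · rintro (⟨hP, hti⟩ | ⟨hP, hti⟩) j <;>
          (by_cases hj : j = i0
           · subst hj
             rw [blockI0, hti]
             simp
           · rw [blockEq j hj]
             exact hP j hj)
    have hdisj : Disjoint
        (Finset.univ.filter fun t : Fin l → V =>
          (∀ j, j ≠ i0 → t j ∈ topTake 2 (e.filter fun uu => B uu = j)) ∧ t i0 = u)
        (Finset.univ.filter fun t : Fin l → V =>
          (∀ j, j ≠ i0 → t j ∈ topTake 2 (e.filter fun uu => B uu = j)) ∧ t i0 = v) := by
      rw [Finset.disjoint_left]
      rintro t ht1 ht2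
      simp only [Finset.mem_filter, Finset.mem_univ, true_and] at ht1 ht2
      exact huv (ht1.2 ▸ ht2.2 ▸ rfl)
    rw [hset, Finset.sum_union hdisj]
  have memx : x ∈ ({x, y, z} : Finset V) := by simp
  have memy : y ∈ ({x, y, z} : Finset V) := by simp
  have memz : z ∈ ({x, y, z} : Finset V) := by simp
  have ex : ({x, y, z} : Finset V).erase x = ({y, z} : Finset V) := by
    rw [Finset.erase_insert]
    simp [hxy, hxz]
  have ey : ({x, y, z} : Finset V).erase y = ({x, z} : Finset V) := by
    rw [Finset.erase_insert_of_ne hxy, Finset.erase_insert]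
    simp [hyz]
  have ez : ({x, y, z} : Finset V).erase z = ({x, y} : Finset V) := by
    rw [Finset.erase_insert_of_ne hxz, Finset.erase_insert_of_ne hyz]
    simp
  have qx := main x y z memx hyz ex
  have qy := main y x z memy hxz ey
  have qz := main z x y memz hxy ez
  rw [qx, qy, qz]
  constructor
  · have : ∀ a b c : ZMod 2, (b + c) + (a + c) + (a + b) = 0 := by decide
    exact this (G x) (G y) (G z)
  · have h2 : ∀ a b c : ZMod 2, (b + c) + (a + c) + (a + b) = 0 := by decide
    have h3 : ∀ a b c : ZMod 2, a + b + c = 0 → a = 0 ∨ b = 0 ∨ c = 0 := by decide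
    exact h3 _ _ _ (h2 (G x) (G y) (G z))
end
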